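/- arXiv:1603.02994 — 3 statements merged into one kernel-verified Lean document; each statement's English description precedes it below -/
import Mathlib

section
/- Let $\omega = \frac{dx}{x^3}\wedge\alpha + \frac{\beta}{x^2}$ near $Z = \{x = 0\}$ in a manifold of dimension $2n$, with $\alpha$ a smooth 1-form and $\beta$ a smooth 2-form. If $\omega$ is closed then $\beta|_Z = -\frac{1}{2}d\alpha|_Z$, and if moreover $\omega^n \ne 0$ at $Z$ then $\alpha \wedge (d\alpha)^{n-1} \ne 0$ as a form on $Z$; i.e., $\alpha$ restricts to a contact form on $Z$. -/
noncomputable section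

open ExteriorAlgebra

/-- The coordinate covector `dx_i` as an element of the exterior algebra. -/
def dxC (N : ℕ) (i : Fin N) : ExteriorAlgebra ℝ (Fin N → ℝ) :=
  ExteriorAlgebra.ι ℝ (Pi.single i 1)

/-- A 2-form `∑ b_{ij} dx_i ∧ dx_j` given by its coefficient functions. -/
def twoF (N : ℕ) (b : (Fin N → ℝ) → Fin N → Fin N → ℝ) (v : Fin N → ℝ) :
    ExteriorAlgebra ℝ (Fin N → ℝ) :=
  ∑ i, ∑ j, b v i j • (dxC N i * dxC N j)

/-- The exterior derivative of a 1-form given by its coefficient functions. -/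
def d1 (N : ℕ) (a : (Fin N → ℝ) → Fin N → ℝ) (v : Fin N → ℝ) :
    ExteriorAlgebra ℝ (Fin N → ℝ) :=
  ∑ i, ∑ j, (fderiv ℝ (fun w => a w j) v (Pi.single i 1)) • (dxC N i * dxC N j)

/-- The exterior derivative of a 2-form given by its coefficient functions. -/
def d2 (N : ℕ) (c : (Fin N → ℝ) → Fin N → Fin N → ℝ) (v : Fin N → ℝ) :
    ExteriorAlgebra ℝ (Fin N → ℝ) :=
  ∑ l, ∑ i, ∑ j, (fderiv ℝ (fun w => c w i j) v (Pi.single l 1)) •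
    (dxC N l * dxC N i * dxC N j)

section Aux
variable {N : ℕ}

lemma ι_anti (u w : Fin N → ℝ) :
    ι ℝ u * ι ℝ w = -(ι ℝ w * ι ℝ u) :=
  eq_neg_of_add_eq_zero_left (ι_add_mul_swap u w)

lemma comm2 (u w z : Fin N → ℝ) :
    (ι ℝ u * ι ℝ w) * ι ℝ z = ι ℝ z * (ι ℝ u * ι ℝ w) := by
  rw [mul_assoc, ι_anti w z, mul_neg, ← mul_assoc, ι_anti u z, neg_mul, neg_neg, mul_assoc]

lemma triple_swap (u z w : Fin N → ℝ) :
    ι ℝ u * ι ℝ z * ι ℝ w = -(ι ℝ z * (ι ℝ u * ι ℝ w)) := by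
  rw [ι_anti u z, neg_mul, mul_assoc]

set_option maxHeartbeats 1000000 in
lemma keyId (N : ℕ) (i0 : Fin N)
    (a : (Fin N → ℝ) → Fin N → ℝ) (b : (Fin N → ℝ) → Fin N → Fin N → ℝ)
    (ha : ∀ j, ContDiff ℝ (⊤ : ℕ∞) fun v => a v j) (hb : ∀ i j, ContDiff ℝ (⊤ : ℕ∞) fun v => b v i j)
    (v : Fin N → ℝ) (hx : v i0 ≠ 0) :
    d2 N (fun w i j => ((w i0)^3)⁻¹ * (if i = i0 then a w j else 0) + ((w i0)^2)⁻¹ * b w i j) v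
      = (-(((v i0)^3)⁻¹)) • (dxC N i0 * d1 N a v)
        + (-((2:ℝ) * v i0) / (((v i0)^2)^2)) • (dxC N i0 * twoF N b v)
        + ((v i0)^2)⁻¹ • d2 N b v := by
  set r3 : ℝ := -((3:ℝ) * v i0 ^ 2) / ((v i0)^3)^2 with hr3
  set r2 : ℝ := -((2:ℝ) * v i0) / ((v i0)^2)^2 with hr2
  set π : (Fin N → ℝ) →L[ℝ] ℝ := ContinuousLinearMap.proj i0 with hπdef
  have hπ : HasFDerivAt (fun w : Fin N → ℝ => w i0) π v := by
    exact (ContinuousLinearMap.proj (R := ℝ) (φ := fun _ : Fin N => ℝ) i0).hasFDerivAt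
  have h3 : HasFDerivAt (fun w : Fin N → ℝ => ((w i0)^3)⁻¹) (r3 • π) v := by
    have h := ((hasDerivAt_pow 3 (v i0)).inv (pow_ne_zero 3 hx))
    norm_num at h
    have h' := (show HasDerivAt (fun x : ℝ => (x^3)⁻¹) r3 (v i0) from h).comp_hasFDerivAt v hπ
    exact h'
  have h2 : HasFDerivAt (fun w : Fin N → ℝ => ((w i0)^2)⁻¹) (r2 • π) v := by
    have h := ((hasDerivAt_pow 2 (v i0)).inv (pow_ne_zero 2 hx))
    norm_num at h
    have h' := (show HasDerivAt (fun x : ℝ => (x^2)⁻¹) r2 (v i0) from h).comp_hasFDerivAt v hπ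
    exact h'
  have hfd : ∀ (i j : Fin N),
      fderiv ℝ (fun w => ((w i0)^3)⁻¹ * (if i = i0 then a w j else 0)
          + ((w i0)^2)⁻¹ * b w i j) v
        = (if i = i0 then ((v i0 ^3)⁻¹ • (fderiv ℝ (fun w => a w j) v)
              + (a v j) • (r3 • π)) else 0)
          + ((v i0 ^2)⁻¹ • (fderiv ℝ (fun w => b w i j) v) + (b v i j) • (r2 • π)) := by
    intro i j
    have haj : HasFDerivAt (fun w => a w j) (fderiv ℝ (fun w => a w j) v) v :=
      (((ha j).differentiable (by simp)) v).hasFDerivAt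
    have hbij : HasFDerivAt (fun w => b w i j) (fderiv ℝ (fun w => b w i j) v) v :=
      (((hb i j).differentiable (by simp)) v).hasFDerivAt
    by_cases hi : i = i0
    · simp only [if_pos hi]
      exact ((h3.mul haj).add (h2.mul hbij)).fderiv
    · simp only [if_neg hi, mul_zero]
      exact ((hasFDerivAt_const (0:ℝ) v).add (h2.mul hbij)).fderiv
  have hπs : ∀ l : Fin N, π (Pi.single l 1) = if l = i0 then 1 else 0 := by
    intro l
    by_cases h : l = i0 <;> simp [hπdef, Pi.single_apply, h]
  have expand : d2 N (fun w i j => ((w i0)^3)⁻¹ * (if i = i0 then a w j else 0)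
        + ((w i0)^2)⁻¹ * b w i j) v
      = ∑ l, ∑ i, ∑ j,
          ((if i = i0 then ((v i0^3)⁻¹ * fderiv ℝ (fun w => a w j) v (Pi.single l 1)
              + a v j * (r3 * (if l = i0 then 1 else 0))) else 0)
            + ((v i0^2)⁻¹ * fderiv ℝ (fun w => b w i j) v (Pi.single l 1)
              + b v i j * (r2 * (if l = i0 then 1 else 0))))
            • (dxC N l * dxC N i * dxC N j) := by
    simp only [d2]
    refine Finset.sum_congr rfl fun l _ => Finset.sum_congr rfl fun i _ =>
      Finset.sum_congr rfl fun j _ => ?_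
    rw [hfd i j]
    simp only [ContinuousLinearMap.add_apply, ContinuousLinearMap.coe_smul', Pi.smul_apply,
      smul_eq_mul, hπs, apply_ite (fun f : (Fin N → ℝ) →L[ℝ] ℝ => f (Pi.single l 1)),
      ContinuousLinearMap.zero_apply]
  have hmul1 : dxC N i0 * d1 N a v
      = ∑ l, ∑ j, (fderiv ℝ (fun w => a w j) v (Pi.single l 1))
          • (dxC N i0 * (dxC N l * dxC N j)) := by
    rw [d1, Finset.mul_sum]
    refine Finset.sum_congr rfl fun l _ => ?_
    rw [Finset.mul_sum]
    exact Finset.sum_congr rfl fun j _ => (mul_smul_comm _ _ _)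
  have hmul2 : dxC N i0 * twoF N b v
      = ∑ i, ∑ j, b v i j • (dxC N i0 * (dxC N i * dxC N j)) := by
    rw [twoF, Finset.mul_sum]
    refine Finset.sum_congr rfl fun i _ => ?_
    rw [Finset.mul_sum]
    exact Finset.sum_congr rfl fun j _ => (mul_smul_comm _ _ _)
  have hSA : (∑ l, ∑ i, ∑ j,
        (if i = i0 then ((v i0^3)⁻¹ * fderiv ℝ (fun w => a w j) v (Pi.single l 1)
            + a v j * (r3 * (if l = i0 then 1 else 0))) else 0)
          • (dxC N l * dxC N i * dxC N j))
      = (-(((v i0)^3)⁻¹)) • (dxC N i0 * d1 N a v) := by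
    have h1 : ∀ l : Fin N, (∑ i, ∑ j,
          (if i = i0 then ((v i0^3)⁻¹ * fderiv ℝ (fun w => a w j) v (Pi.single l 1)
              + a v j * (r3 * (if l = i0 then 1 else 0))) else 0)
            • (dxC N l * dxC N i * dxC N j))
        = ∑ j, ((v i0^3)⁻¹ * fderiv ℝ (fun w => a w j) v (Pi.single l 1)
              + a v j * (r3 * (if l = i0 then 1 else 0)))
            • (dxC N l * dxC N i0 * dxC N j) := by
      intro l
      rw [Fintype.sum_eq_single i0 (fun i hi => Finset.sum_eq_zero fun j _ => by
        rw [if_neg hi, zero_smul])]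
      exact Finset.sum_congr rfl fun j _ => by rw [if_pos rfl]
    rw [Finset.sum_congr rfl fun l _ => h1 l]
    have h2 : (∑ l, ∑ j, ((v i0^3)⁻¹ * fderiv ℝ (fun w => a w j) v (Pi.single l 1)
              + a v j * (r3 * (if l = i0 then 1 else 0)))
            • (dxC N l * dxC N i0 * dxC N j))
        = (∑ l, ∑ j, ((v i0^3)⁻¹ * fderiv ℝ (fun w => a w j) v (Pi.single l 1))
            • (dxC N l * dxC N i0 * dxC N j))
          + ∑ l, ∑ j, (a v j * (r3 * (if l = i0 then 1 else 0)))
            • (dxC N l * dxC N i0 * dxC N j) := by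
      simp only [add_smul, Finset.sum_add_distrib]
    rw [h2]
    have h3 : (∑ l, ∑ j, (a v j * (r3 * (if l = i0 then 1 else 0)))
            • (dxC N l * dxC N i0 * dxC N j)) = 0 := by
      refine Finset.sum_eq_zero fun l _ => Finset.sum_eq_zero fun j _ => ?_
      by_cases hl : l = i0
      · subst hl
        have : dxC N l * dxC N l = 0 := ι_sq_zero _
        rw [this, zero_mul, smul_zero]
      · rw [if_neg hl, mul_zero, mul_zero, zero_smul]
    rw [h3, add_zero, hmul1, Finset.smul_sum]
    refine Finset.sum_congr rfl fun l _ => ?_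
    rw [Finset.smul_sum]
    refine Finset.sum_congr rfl fun j _ => ?_
    have hts : dxC N l * dxC N i0 * dxC N j
        = -(dxC N i0 * (dxC N l * dxC N j)) := triple_swap _ _ _
    rw [hts, smul_neg, smul_smul, neg_mul, neg_smul]
  have hSB1 : (∑ l, ∑ i, ∑ j,
        ((v i0^2)⁻¹ * fderiv ℝ (fun w => b w i j) v (Pi.single l 1))
          • (dxC N l * dxC N i * dxC N j))
      = ((v i0)^2)⁻¹ • d2 N b v := by
    rw [d2]
    simp only [Finset.smul_sum, smul_smul]
  have hSB2 : (∑ l, ∑ i, ∑ j,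
        (b v i j * (r2 * (if l = i0 then 1 else 0)))
          • (dxC N l * dxC N i * dxC N j))
      = r2 • (dxC N i0 * twoF N b v) := by
    rw [Fintype.sum_eq_single i0 (fun l hl => Finset.sum_eq_zero fun i _ =>
      Finset.sum_eq_zero fun j _ => by rw [if_neg hl, mul_zero, mul_zero, zero_smul])]
    rw [hmul2, Finset.smul_sum]
    refine Finset.sum_congr rfl fun i _ => ?_
    rw [Finset.smul_sum]
    refine Finset.sum_congr rfl fun j _ => ?_
    rw [if_pos rfl, mul_one, ← mul_assoc, smul_smul, mul_comm r2]
  calc d2 N (fun w i j => ((w i0)^3)⁻¹ * (if i = i0 then a w j else 0)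
        + ((w i0)^2)⁻¹ * b w i j) v
      = (∑ l, ∑ i, ∑ j,
          (if i = i0 then ((v i0^3)⁻¹ * fderiv ℝ (fun w => a w j) v (Pi.single l 1)
              + a v j * (r3 * (if l = i0 then 1 else 0))) else 0)
            • (dxC N l * dxC N i * dxC N j))
        + ((∑ l, ∑ i, ∑ j,
            ((v i0^2)⁻¹ * fderiv ℝ (fun w => b w i j) v (Pi.single l 1))
              • (dxC N l * dxC N i * dxC N j))
          + ∑ l, ∑ i, ∑ j,
            (b v i j * (r2 * (if l = i0 then 1 else 0)))
              • (dxC N l * dxC N i * dxC N j)) := by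
        rw [expand]
        simp only [add_smul, Finset.sum_add_distrib]
    _ = (-(((v i0)^3)⁻¹)) • (dxC N i0 * d1 N a v)
        + (((v i0)^2)⁻¹ • d2 N b v + r2 • (dxC N i0 * twoF N b v)) := by
        rw [hSA, hSB1, hSB2]
    _ = (-(((v i0)^3)⁻¹)) • (dxC N i0 * d1 N a v)
        + (-((2:ℝ) * v i0) / (((v i0)^2)^2)) • (dxC N i0 * twoF N b v)
        + ((v i0)^2)⁻¹ • d2 N b v := by
        rw [hr2]
        abel

section Aux2
variable {N : ℕ}

lemma sum2_mul_ι (r : Fin N → Fin N → ℝ) (z : Fin N → ℝ) :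
    (∑ i, ∑ j, r i j • (dxC N i * dxC N j)) * ι ℝ z
      = ι ℝ z * ∑ i, ∑ j, r i j • (dxC N i * dxC N j) := by
  rw [Finset.sum_mul, Finset.mul_sum]
  refine Finset.sum_congr rfl fun i _ => ?_
  rw [Finset.sum_mul, Finset.mul_sum]
  refine Finset.sum_congr rfl fun j _ => ?_
  simp only [dxC]
  rw [smul_mul_assoc, mul_smul_comm, comm2]

lemma pow_congr_mul (z : Fin N → ℝ) (B C : ExteriorAlgebra ℝ (Fin N → ℝ))
    (hC : C * ι ℝ z = ι ℝ z * C)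
    (h : ι ℝ z * B = ι ℝ z * C) (k : ℕ) :
    ι ℝ z * B ^ k = ι ℝ z * C ^ k := by
  induction k with
  | zero => simp
  | succ k ih =>
    calc ι ℝ z * B ^ (k+1) = (ι ℝ z * B) * B ^ k := by rw [pow_succ', mul_assoc]
      _ = (C * ι ℝ z) * B ^ k := by rw [h, ← hC]
      _ = C * (ι ℝ z * C ^ k) := by rw [mul_assoc, ih]
      _ = ι ℝ z * C ^ (k+1) := by rw [← mul_assoc, hC, mul_assoc, ← pow_succ']

end Aux2


set_option maxHeartbeats 1000000 in
/-- Proposition 3.1: let `ω = dx/x³ ∧ α + β/x²` near `Z = {x = 0}` (the coordinate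
`v 0`) in dimension `2n`, with `α` a smooth 1-form with coefficients `a` and `β` a smooth
2-form with coefficients `b`.  If `ω` is closed on `{x ≠ 0}` then `β|_Z = -½ dα|_Z`
(i.e. `dx ∧ (β + ½ dα) = 0` at `Z`), and if moreover `ω` is non-degenerate as a
scattering form at `Z` (`dx ∧ α ∧ β^{n-1} ≠ 0` at `Z`) then `α ∧ (dα)^{n-1} ≠ 0` on `Z`,
i.e. `α` restricts to a contact form on `Z`. -/
theorem stmt_10 (n : ℕ) (hn : 1 ≤ n)
    (a : (Fin (2 * n) → ℝ) → Fin (2 * n) → ℝ)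
    (b : (Fin (2 * n) → ℝ) → Fin (2 * n) → Fin (2 * n) → ℝ)
    (ha : ∀ j, ContDiff ℝ (⊤ : ℕ∞) fun v => a v j)
    (hb : ∀ i j, ContDiff ℝ (⊤ : ℕ∞) fun v => b v i j)
    (c : (Fin (2 * n) → ℝ) → Fin (2 * n) → Fin (2 * n) → ℝ)
    (hc : c = fun v i j =>
      ((v ⟨0, by omega⟩) ^ 3)⁻¹ * (if i = (⟨0, by omega⟩ : Fin (2 * n)) then a v j else 0)
        + ((v ⟨0, by omega⟩) ^ 2)⁻¹ * b v i j)
    (hclosed : ∀ v, v ⟨0, by omega⟩ ≠ 0 → d2 (2 * n) c v = 0)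
    (hnondeg : ∀ v, v ⟨0, by omega⟩ = 0 →
      dxC (2 * n) ⟨0, by omega⟩ * ExteriorAlgebra.ι ℝ (a v) * (twoF (2 * n) b v) ^ (n - 1)
        ≠ 0) :
    (∀ v, v ⟨0, by omega⟩ = 0 →
        dxC (2 * n) ⟨0, by omega⟩ *
          (twoF (2 * n) b v + (2 : ℝ)⁻¹ • d1 (2 * n) a v) = 0) ∧
      (∀ v, v ⟨0, by omega⟩ = 0 →
        dxC (2 * n) ⟨0, by omega⟩ * ExteriorAlgebra.ι ℝ (a v) * (d1 (2 * n) a v) ^ (n - 1)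
          ≠ 0) := by
  classical
  have h0 : 0 < 2 * n := by omega
  set i0 : Fin (2 * n) := ⟨0, h0⟩ with hi0
  subst hc
  -- Claim A: the closedness identity extends off Z
  have hA : ∀ v : Fin (2 * n) → ℝ, v i0 ≠ 0 →
      dxC (2 * n) i0 * d1 (2 * n) a v + (2 : ℝ) • (dxC (2 * n) i0 * twoF (2 * n) b v)
        - (v i0) • d2 (2 * n) b v = 0 := by
    intro v hx
    have hid := keyId (2 * n) i0 a b ha hb v hx
    have hz : d2 (2 * n) (fun w i j => ((w i0) ^ 3)⁻¹ * (if i = i0 then a w j else 0)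
        + ((w i0) ^ 2)⁻¹ * b w i j) v = 0 := hclosed v hx
    rw [hz] at hid
    have hid' := hid.symm
    have e1 : (-(v i0 ^ 3) : ℝ) * (-((v i0 ^ 3)⁻¹)) = 1 := by field_simp
    have e2 : (-(v i0 ^ 3) : ℝ) * (-((2:ℝ) * v i0) / ((v i0 ^ 2) ^ 2)) = 2 := by
      field_simp
    have e3 : (-(v i0 ^ 3) : ℝ) * ((v i0 ^ 2)⁻¹) = -(v i0) := by
      field_simp
    have h := congrArg (fun z => (-(v i0 ^ 3) : ℝ) • z) hid'
    simp only [smul_add, smul_smul, smul_zero] at h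
    rw [e1, e2, e3, one_smul] at h
    rw [sub_eq_add_neg, ← neg_smul]
    exact h
  -- Claim B: extend to Z by continuity
  have hA0 : ∀ v : Fin (2 * n) → ℝ, v i0 = 0 →
      dxC (2 * n) i0 * d1 (2 * n) a v
        + (2 : ℝ) • (dxC (2 * n) i0 * twoF (2 * n) b v) = 0 := by
    intro v hv
    by_contra hne
    set G : (Fin (2 * n) → ℝ) → ExteriorAlgebra ℝ (Fin (2 * n) → ℝ) := fun u =>
      dxC (2 * n) i0 * d1 (2 * n) a u + (2 : ℝ) • (dxC (2 * n) i0 * twoF (2 * n) b u)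
        - (u i0) • d2 (2 * n) b u with hG
    have hGv : G v ≠ 0 := by
      rw [hG]
      simp only [hv, zero_smul, sub_zero]
      exact hne
    set bb := Module.Basis.ofVectorSpace ℝ (ExteriorAlgebra ℝ (Fin (2 * n) → ℝ)) with hbb
    obtain ⟨q, hq⟩ : ∃ q, bb.repr (G v) q ≠ 0 := by
      by_contra hq
      push_neg at hq
      exact hGv ((LinearEquiv.map_eq_zero_iff bb.repr).mp (Finsupp.ext hq))
    set φ : ExteriorAlgebra ℝ (Fin (2 * n) → ℝ) →ₗ[ℝ] ℝ := bb.coord q with hφ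
    have hexp : ∀ u, φ (G u)
        = (∑ i, ∑ j, (fderiv ℝ (fun w => a w j) u (Pi.single i 1))
              * φ (dxC (2 * n) i0 * (dxC (2 * n) i * dxC (2 * n) j)))
          + (2:ℝ) * (∑ i, ∑ j, b u i j * φ (dxC (2 * n) i0 * (dxC (2 * n) i * dxC (2 * n) j)))
          - (u i0) * (∑ l, ∑ i, ∑ j, (fderiv ℝ (fun w => b w i j) u (Pi.single l 1))
              * φ (dxC (2 * n) l * dxC (2 * n) i * dxC (2 * n) j)) := by
      intro u
      rw [hG]
      simp only [d1, d2, twoF, Finset.mul_sum, mul_smul_comm, map_sub, map_add, map_smul,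
        map_sum, smul_eq_mul]
    have hcont : Continuous fun u => φ (G u) := by
      rw [funext hexp]
      refine Continuous.sub (Continuous.add ?_ ?_) ?_
      · exact continuous_finset_sum _ fun i _ => continuous_finset_sum _ fun j _ =>
          ((((ha j).continuous_fderiv (by simp)).clm_apply continuous_const).mul continuous_const)
      · exact continuous_const.mul (continuous_finset_sum _ fun i _ =>
          continuous_finset_sum _ fun j _ => ((hb i j).continuous.mul continuous_const))
      · exact (continuous_apply i0).mul (continuous_finset_sum _ fun l _ =>
          continuous_finset_sum _ fun i _ => continuous_finset_sum _ fun j _ =>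
          ((((hb i j).continuous_fderiv (by simp)).clm_apply continuous_const).mul
            continuous_const))
    have hzero : ∀ t : ℝ, t ≠ 0 → φ (G (Function.update v i0 t)) = 0 := by
      intro t ht
      have hu : (Function.update v i0 t) i0 = t := Function.update_self i0 t v
      have h0' : G (Function.update v i0 t) = 0 := by
        rw [hG]
        exact hA _ (by rw [hu]; exact ht)
      rw [h0', map_zero]
    have hwcont : Continuous fun t : ℝ => Function.update v i0 t :=
      continuous_const.update i0 continuous_id
    have h1 : Filter.Tendsto (fun t : ℝ => φ (G (Function.update v i0 t)))
        (nhdsWithin 0 {(0:ℝ)}ᶜ) (nhds (φ (G (Function.update v i0 0)))) :=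
      ((hcont.comp hwcont).tendsto 0).mono_left nhdsWithin_le_nhds
    have h2 : (fun t : ℝ => φ (G (Function.update v i0 t)))
        =ᶠ[nhdsWithin 0 {(0:ℝ)}ᶜ] fun _ => (0:ℝ) := by
      filter_upwards [self_mem_nhdsWithin] with t ht
      exact hzero t ht
    have h3 : φ (G (Function.update v i0 0)) = 0 :=
      tendsto_nhds_unique (Filter.Tendsto.congr' h2 h1) tendsto_const_nhds
    have hup : Function.update v i0 0 = v := by
      rw [← hv]
      exact Function.update_eq_self i0 v
    rw [hup] at h3
    have hφG : φ (G v) ≠ 0 := by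
      rw [hφ]
      simpa [Module.Basis.coord_apply] using hq
    exact hφG h3
  constructor
  · intro v hv
    have h := hA0 v hv
    have h' : dxC (2 * n) i0 * d1 (2 * n) a v
        = -((2:ℝ) • (dxC (2 * n) i0 * twoF (2 * n) b v)) := eq_neg_of_add_eq_zero_left h
    show dxC (2 * n) i0 * (twoF (2 * n) b v + (2 : ℝ)⁻¹ • d1 (2 * n) a v) = 0
    rw [mul_add, mul_smul_comm, h', ← neg_smul, smul_smul]
    have hs : ((2:ℝ)⁻¹ * (-2:ℝ)) = -1 := by norm_num
    rw [hs, neg_one_smul]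
    exact add_neg_cancel _
  · intro v hv
    have h := hA0 v hv
    set z0 : Fin (2 * n) → ℝ := Pi.single i0 1 with hz0
    have hdx : dxC (2 * n) i0 = ι ℝ z0 := rfl
    have htc : twoF (2 * n) b v * ι ℝ z0 = ι ℝ z0 * twoF (2 * n) b v := by
      simp only [twoF]
      exact sum2_mul_ι _ _
    have hCc : ((-2:ℝ) • twoF (2 * n) b v) * ι ℝ z0
        = ι ℝ z0 * ((-2:ℝ) • twoF (2 * n) b v) := by
      rw [smul_mul_assoc, htc, mul_smul_comm]
    have hkey : ι ℝ z0 * d1 (2 * n) a v = ι ℝ z0 * ((-2:ℝ) • twoF (2 * n) b v) := by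
      have h1 : dxC (2 * n) i0 * d1 (2 * n) a v
          = -((2:ℝ) • (dxC (2 * n) i0 * twoF (2 * n) b v)) := eq_neg_of_add_eq_zero_left h
      rw [mul_smul_comm, neg_smul, ← hdx]
      exact h1
    have hpow := pow_congr_mul z0 (d1 (2 * n) a v) ((-2:ℝ) • twoF (2 * n) b v)
      hCc hkey (n - 1)
    have hBa : d1 (2 * n) a v * ι ℝ (a v) = ι ℝ (a v) * d1 (2 * n) a v := by
      simp only [d1]
      exact sum2_mul_ι _ _
    have hCa : ((-2:ℝ) • twoF (2 * n) b v) * ι ℝ (a v)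
        = ι ℝ (a v) * ((-2:ℝ) • twoF (2 * n) b v) := by
      have htca : twoF (2 * n) b v * ι ℝ (a v) = ι ℝ (a v) * twoF (2 * n) b v := by
        simp only [twoF]
        exact sum2_mul_ι _ _
      rw [smul_mul_assoc, htca, mul_smul_comm]
    have hBa' : Commute (d1 (2 * n) a v) (ι ℝ (a v)) := hBa
    have hCa' : Commute ((-2:ℝ) • twoF (2 * n) b v) (ι ℝ (a v)) := hCa
    have hBpow := hBa'.pow_left (n - 1)
    have hCpow := hCa'.pow_left (n - 1)
    have hchain : ι ℝ z0 * ι ℝ (a v) * (d1 (2 * n) a v) ^ (n - 1)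
        = ((-2:ℝ) ^ (n - 1)) • (ι ℝ z0 * ι ℝ (a v) * (twoF (2 * n) b v) ^ (n - 1)) := by
      calc ι ℝ z0 * ι ℝ (a v) * (d1 (2 * n) a v) ^ (n - 1)
          = ι ℝ z0 * ((d1 (2 * n) a v) ^ (n - 1) * ι ℝ (a v)) := by
            rw [mul_assoc, ← hBpow.eq]
        _ = (ι ℝ z0 * ((-2:ℝ) • twoF (2 * n) b v) ^ (n - 1)) * ι ℝ (a v) := by
            rw [← mul_assoc, hpow]
        _ = ι ℝ z0 * (ι ℝ (a v) * ((-2:ℝ) • twoF (2 * n) b v) ^ (n - 1)) := by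
            rw [mul_assoc, hCpow.eq]
        _ = ((-2:ℝ) ^ (n - 1)) • (ι ℝ z0 * ι ℝ (a v) * (twoF (2 * n) b v) ^ (n - 1)) := by
            rw [smul_pow, mul_smul_comm, mul_smul_comm, mul_assoc]
    intro hcon
    have hcon' : ι ℝ z0 * ι ℝ (a v) * (d1 (2 * n) a v) ^ (n - 1) = 0 := hcon
    rw [hchain] at hcon'
    have h20 : ((-2:ℝ)) ^ (n - 1) ≠ 0 := pow_ne_zero _ (by norm_num)
    have hfin := (smul_eq_zero.mp hcon').resolve_left h20
    exact hnondeg v hv hfin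
end Aux
end
end

section
/- With $x = \phi\tilde{x}$ for $\phi$ smooth positive nowhere vanishing, the restrictions to $Z$ satisfy $\frac{dx}{x^3}\wedge\alpha - \frac{d\alpha}{2x^2} = \frac{d\tilde{x}}{\tilde{x}^3}\wedge\frac{\alpha}{\phi^2} - \frac{d(\alpha/\phi^2)}{2\tilde{x}^2}$ at $Z$. Hence the contact form induced by a scattering-symplectic form changes by the conformal factor $1/\phi^2$ under change of defining function, and in particular the contact structure $\ker\alpha$ on $Z$ is well-defined. -/
noncomputable section

/-- The exterior derivative of a 1-form `γ` (valued in continuous linear functionals),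
evaluated pointwise on a pair of tangent vectors. -/
def extd1 {E : Type*} [NormedAddCommGroup E] [NormedSpace ℝ E]
    (γ : E → E →L[ℝ] ℝ) (v a b : E) : ℝ :=
  fderiv ℝ (fun w => γ w b) v a - fderiv ℝ (fun w => γ w a) v b

/-- Change of defining function for the scattering-symplectic normal form: with
`x = φ x̃` for `φ` smooth, positive and nowhere vanishing, one has (away from
`Z = {x̃ = 0}`, as 2-forms evaluated on tangent vectors `u, w`)
`dx/x³ ∧ α - dα/(2x²) = dx̃/x̃³ ∧ (α/φ²) - d(α/φ²)/(2x̃²)`.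
Hence the contact form induced by a scattering-symplectic form changes by the conformal
factor `1/φ²` under change of defining function; in particular the contact structure
`ker α` is well-defined: `ker(α/φ²) = ker α` pointwise. -/
theorem stmt_11 {E : Type*} [NormedAddCommGroup E] [NormedSpace ℝ E]
    (x xt φ : E → ℝ) (hφ : ContDiff ℝ (⊤ : ℕ∞) φ) (hxt : ContDiff ℝ (⊤ : ℕ∞) xt)
    (hφpos : ∀ v, 0 < φ v) (hx : x = fun v => φ v * xt v)
    (α : E → E →L[ℝ] ℝ) (hα : ContDiff ℝ (⊤ : ℕ∞) α) :
    (∀ v, xt v ≠ 0 → ∀ u w : E,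
      ((x v) ^ 3)⁻¹ * (fderiv ℝ x v u * α v w - fderiv ℝ x v w * α v u)
          - (2 * (x v) ^ 2)⁻¹ * extd1 α v u w
        = ((xt v) ^ 3)⁻¹ *
            (fderiv ℝ xt v u * (((φ v) ^ 2)⁻¹ * α v w)
              - fderiv ℝ xt v w * (((φ v) ^ 2)⁻¹ * α v u))
          - (2 * (xt v) ^ 2)⁻¹ *
            extd1 (fun w' => ((φ w') ^ 2)⁻¹ • α w') v u w) ∧
      (∀ v u, α v u = 0 ↔ ((φ v) ^ 2)⁻¹ * α v u = 0) := by
  subst hx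
  constructor
  · intro v hv u w
    have hφv : φ v ≠ 0 := (hφpos v).ne'
    have hdφ : HasFDerivAt φ (fderiv ℝ φ v) v := (hφ.differentiable (by simp) v).hasFDerivAt
    have hdxt : HasFDerivAt xt (fderiv ℝ xt v) v := (hxt.differentiable (by simp) v).hasFDerivAt
    have hdα : ∀ b : E, HasFDerivAt (fun w' => α w' b) (fderiv ℝ (fun w' => α w' b) v) v :=
      fun b => (((hα.differentiable (by simp) v).clm_apply (differentiableAt_const b))).hasFDerivAt
    have hdx : fderiv ℝ (fun v => φ v * xt v) v
        = φ v • fderiv ℝ xt v + xt v • fderiv ℝ φ v := (hdφ.mul hdxt).fderiv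
    have hsq : HasFDerivAt (fun w => (φ w) ^ 2) ((φ v • fderiv ℝ φ v) + (φ v • fderiv ℝ φ v)) v := by
      simp only [pow_two]; exact hdφ.mul hdφ
    have hinv : HasFDerivAt (fun w => ((φ w) ^ 2)⁻¹)
        ((ContinuousLinearMap.smulRight (1 : ℝ →L[ℝ] ℝ) (-(((φ v) ^ 2) ^ 2)⁻¹)).comp
          (φ v • fderiv ℝ φ v + φ v • fderiv ℝ φ v)) v :=
      (hasFDerivAt_inv (pow_ne_zero 2 hφv)).comp v hsq
    have hprod : ∀ b : E, fderiv ℝ (fun w' => ((φ w') ^ 2)⁻¹ * α w' b) v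
        = ((φ v) ^ 2)⁻¹ • fderiv ℝ (fun w' => α w' b) v
          + α v b • ((ContinuousLinearMap.smulRight (1 : ℝ →L[ℝ] ℝ) (-(((φ v) ^ 2) ^ 2)⁻¹)).comp
              (φ v • fderiv ℝ φ v + φ v • fderiv ℝ φ v)) :=
      fun b => (hinv.mul (hdα b)).fderiv
    simp only [extd1, ContinuousLinearMap.smul_apply, smul_eq_mul]
    rw [hdx, hprod u, hprod w]
    simp only [ContinuousLinearMap.add_apply, ContinuousLinearMap.smul_apply, smul_eq_mul,
      ContinuousLinearMap.comp_apply, ContinuousLinearMap.smulRight_apply,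
      ContinuousLinearMap.one_apply]
    field_simp
    ring
  · intro v u
    have hφv : ((φ v) ^ 2)⁻¹ ≠ 0 := inv_ne_zero (pow_ne_zero 2 (hφpos v).ne')
    constructor
    · intro h; simp [h]
    · intro h; exact (mul_eq_zero.mp h).resolve_left hφv
end
end

section
/- On the chart $U_{x_1} = \mathbb{S}^{2n}\setminus\{x_1 = 0\}$ of the sphere with coordinates $(y_1,x_2,y_2,\dots,x_n,y_n,z)$ and $x_1 = \sqrt{1 - y_1^2 - \sum_{i\ge 2}(x_i^2+y_i^2) - z^2}$, the coefficient of $\frac{dz}{z^3}\wedge dy_1$ in the form $\beta = -2\frac{dz}{z^3}\wedge\sigma + \frac{d\sigma}{z^2}$ equals $-\left(x_1 + \frac{y_1^2}{x_1} + \frac{z^2}{x_1}\right) = -\frac{x_1^2 + y_1^2 + z^2}{x_1}$, which is nonzero on $U_{x_1}$. -/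
noncomputable section

/-- Chart coordinates `(y₁, x₂,…,xₙ, y₂,…,yₙ, z)` on `U_{x₁} = S^{2n} \ {x₁ = 0}`
(with `n = m + 1`): the first factor is `y₁`, then the remaining `x`'s, the remaining
`y`'s, and `z`. -/
abbrev Chart (m : ℕ) := ℝ × (Fin m → ℝ) × (Fin m → ℝ) × ℝ

/-- `x₁ = sqrt(1 - y₁² - ∑ (xᵢ² + yᵢ²) - z²)` on the chart. -/
def x1F (m : ℕ) (w : Chart m) : ℝ :=
  Real.sqrt (1 - w.1 ^ 2 - (∑ i, ((w.2.1 i) ^ 2 + (w.2.2.1 i) ^ 2)) - w.2.2.2 ^ 2)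

/-- The 1-form `σ = ½ ∑ (x_i dy_i - y_i dx_i)` pulled back to the chart `U_{x₁}`,
evaluated at `w` on a tangent vector `u`; here `dx₁` is the differential of `x1F`. -/
def sigmaChart (m : ℕ) (w u : Chart m) : ℝ :=
  (1 / 2) * (x1F m w * u.1 - w.1 * fderiv ℝ (x1F m) w u
    + ∑ i, (w.2.1 i * u.2.2.1 i - w.2.2.1 i * u.2.1 i))

/-- The form `β = -2 dz/z³ ∧ σ + dσ/z²` in the chart, evaluated on tangent vectors. -/
def betaChart (m : ℕ) (w a b : Chart m) : ℝ :=
  -2 * ((w.2.2.2) ^ 3)⁻¹ * (a.2.2.2 * sigmaChart m w b - b.2.2.2 * sigmaChart m w a)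
    + ((w.2.2.2) ^ 2)⁻¹ *
        (fderiv ℝ (fun v => sigmaChart m v b) w a
          - fderiv ℝ (fun v => sigmaChart m v a) w b)

def gF (m : ℕ) (v : Chart m) : ℝ :=
  1 - v.1 ^ 2 - (∑ i, ((v.2.1 i) ^ 2 + (v.2.2.1 i) ^ 2)) - v.2.2.2 ^ 2

def Py1 (m : ℕ) : Chart m →L[ℝ] ℝ := ContinuousLinearMap.fst ℝ ℝ _
def Px (m : ℕ) (i : Fin m) : Chart m →L[ℝ] ℝ :=
  (ContinuousLinearMap.proj i).comp ((ContinuousLinearMap.fst ℝ _ _).comp (ContinuousLinearMap.snd ℝ ℝ _))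
def Py (m : ℕ) (i : Fin m) : Chart m →L[ℝ] ℝ :=
  (ContinuousLinearMap.proj i).comp ((ContinuousLinearMap.fst ℝ _ _).comp
    ((ContinuousLinearMap.snd ℝ _ _).comp (ContinuousLinearMap.snd ℝ ℝ _)))
def Pz (m : ℕ) : Chart m →L[ℝ] ℝ :=
  (ContinuousLinearMap.snd ℝ _ _).comp ((ContinuousLinearMap.snd ℝ _ _).comp (ContinuousLinearMap.snd ℝ ℝ _))

@[simp] lemma Py1_apply (m : ℕ) (u : Chart m) : Py1 m u = u.1 := rfl
@[simp] lemma Px_apply (m : ℕ) (i : Fin m) (u : Chart m) : Px m i u = u.2.1 i := rfl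
@[simp] lemma Py_apply (m : ℕ) (i : Fin m) (u : Chart m) : Py m i u = u.2.2.1 i := rfl
@[simp] lemma Pz_apply (m : ℕ) (u : Chart m) : Pz m u = u.2.2.2 := rfl

def Lg (m : ℕ) (v : Chart m) : Chart m →L[ℝ] ℝ :=
  -((2 * v.1) • Py1 m) - (∑ i, ((2 * v.2.1 i) • Px m i + (2 * v.2.2.1 i) • Py m i))
    - (2 * v.2.2.2) • Pz m

lemma hasFDerivAt_gF (m : ℕ) (v : Chart m) : HasFDerivAt (gF m) (Lg m v) v := by
  have hfun : gF m = fun v : Chart m => 1 - v.1 * v.1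
      - (∑ i, (v.2.1 i * v.2.1 i + v.2.2.1 i * v.2.2.1 i)) - v.2.2.2 * v.2.2.2 := by
    funext v; simp [gF, pow_two]
  rw [hfun]
  have h1 : HasFDerivAt (fun v : Chart m => v.1) (Py1 m) v := (Py1 m).hasFDerivAt
  have h4 : HasFDerivAt (fun v : Chart m => v.2.2.2) (Pz m) v := (Pz m).hasFDerivAt
  have hx : ∀ i : Fin m, HasFDerivAt (fun v : Chart m => v.2.1 i) (Px m i) v :=
    fun i => (Px m i).hasFDerivAt
  have hy : ∀ i : Fin m, HasFDerivAt (fun v : Chart m => v.2.2.1 i) (Py m i) v :=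
    fun i => (Py m i).hasFDerivAt
  have hsum : HasFDerivAt (fun v : Chart m => ∑ i, (v.2.1 i * v.2.1 i + v.2.2.1 i * v.2.2.1 i))
      (∑ i, ((2 * v.2.1 i) • Px m i + (2 * v.2.2.1 i) • Py m i)) v := by
    apply HasFDerivAt.fun_sum
    intro i _
    have h := ((hx i).mul (hx i)).add ((hy i).mul (hy i))
    have e : v.2.1 i • Px m i + v.2.1 i • Px m i + (v.2.2.1 i • Py m i + v.2.2.1 i • Py m i)
        = (2 * v.2.1 i) • Px m i + (2 * v.2.2.1 i) • Py m i := by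
      refine ContinuousLinearMap.ext fun u => ?_
      simp [ContinuousLinearMap.add_apply, ContinuousLinearMap.smul_apply]
      ring
    exact e ▸ h
  have h := (((hasFDerivAt_const (1:ℝ) v).sub (h1.mul h1)).sub hsum).sub (h4.mul h4)
  have e : (0 - (v.1 • Py1 m + v.1 • Py1 m)
      - (∑ i, ((2 * v.2.1 i) • Px m i + (2 * v.2.2.1 i) • Py m i))
      - (v.2.2.2 • Pz m + v.2.2.2 • Pz m)) = Lg m v := by
    refine ContinuousLinearMap.ext fun u => ?_
    simp [Lg, ContinuousLinearMap.add_apply, ContinuousLinearMap.smul_apply,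
      ContinuousLinearMap.sub_apply, ContinuousLinearMap.neg_apply,
      ContinuousLinearMap.sum_apply, ContinuousLinearMap.zero_apply]
    ring
  exact e ▸ h

lemma x1F_eq (m : ℕ) (w : Chart m) : x1F m w = Real.sqrt (gF m w) := rfl

lemma x1F_pos {m : ℕ} {v : Chart m} (hv : 0 < gF m v) : 0 < x1F m v :=
  Real.sqrt_pos.2 hv

lemma hasFDerivAt_x1F {m : ℕ} {v : Chart m} (hv : 0 < gF m v) :
    HasFDerivAt (x1F m) ((1 / (2 * Real.sqrt (gF m v))) • Lg m v) v := by
  have h := (Real.hasDerivAt_sqrt hv.ne').comp_hasFDerivAt v (hasFDerivAt_gF m v)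
  exact h

lemma Lg_apply (m : ℕ) (v u : Chart m) :
    Lg m v u = -(2 * v.1 * u.1)
      - 2 * (∑ i, (v.2.1 i * u.2.1 i + v.2.2.1 i * u.2.2.1 i))
      - 2 * v.2.2.2 * u.2.2.2 := by
  have hs : (∑ i, ((2 * v.2.1 i) • Px m i + (2 * v.2.2.1 i) • Py m i)) u
      = 2 * (∑ i, (v.2.1 i * u.2.1 i + v.2.2.1 i * u.2.2.1 i)) := by
    rw [ContinuousLinearMap.sum_apply, Finset.mul_sum]
    refine Finset.sum_congr rfl fun i _ => ?_
    simp [ContinuousLinearMap.add_apply, ContinuousLinearMap.smul_apply]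
    ring
  simp only [Lg, ContinuousLinearMap.sub_apply, ContinuousLinearMap.neg_apply,
    ContinuousLinearMap.smul_apply, hs, Py1_apply, Pz_apply, smul_eq_mul]

lemma fderiv_x1F {m : ℕ} {v : Chart m} (hv : 0 < gF m v) (u : Chart m) :
    fderiv ℝ (x1F m) v u
      = -(v.1 * u.1 + (∑ i, (v.2.1 i * u.2.1 i + v.2.2.1 i * u.2.2.1 i))
          + v.2.2.2 * u.2.2.2) / x1F m v := by
  rw [(hasFDerivAt_x1F hv).fderiv]
  have hx := (x1F_pos hv).ne'
  rw [ContinuousLinearMap.smul_apply, Lg_apply, ← x1F_eq, smul_eq_mul]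
  field_simp
  ring

lemma sigma_ey {m : ℕ} {v : Chart m} (hv : 0 < gF m v) :
    sigmaChart m v ((1 : ℝ), (0 : Fin m → ℝ), (0 : Fin m → ℝ), (0 : ℝ))
      = (1 / 2) * (x1F m v + v.1 * v.1 / x1F m v) := by
  have hx := (x1F_pos hv).ne'
  rw [sigmaChart, fderiv_x1F hv]
  simp
  field_simp
  ring

lemma sigma_ez {m : ℕ} {v : Chart m} (hv : 0 < gF m v) :
    sigmaChart m v ((0 : ℝ), (0 : Fin m → ℝ), (0 : Fin m → ℝ), (1 : ℝ))
      = (1 / 2) * (v.1 * v.2.2.2 / x1F m v) := by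
  have hx := (x1F_pos hv).ne'
  rw [sigmaChart, fderiv_x1F hv]
  simp
  field_simp

lemma continuous_gF (m : ℕ) : Continuous (gF m) := by
  unfold gF
  fun_prop

lemma isOpen_dom (m : ℕ) : IsOpen {v : Chart m | 0 < gF m v} :=
  isOpen_lt continuous_const (continuous_gF m)

lemma fderiv_sigma_ey {m : ℕ} {w : Chart m} (hw : 0 < gF m w) :
    fderiv ℝ (fun v => sigmaChart m v ((1 : ℝ), (0 : Fin m → ℝ), (0 : Fin m → ℝ), (0 : ℝ))) w
        ((0 : ℝ), (0 : Fin m → ℝ), (0 : Fin m → ℝ), (1 : ℝ))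
      = (1 / 2) * (-(w.2.2.2) / x1F m w + w.1 * w.1 * w.2.2.2 / (x1F m w) ^ 3) := by
  have hxne := (x1F_pos hw).ne'
  have hx1 := hasFDerivAt_x1F hw
  have hy1 := ((Py1 m).hasFDerivAt (x := w)).mul ((Py1 m).hasFDerivAt (x := w))
  have hinv := (hasDerivAt_inv hxne).comp_hasFDerivAt w hx1
  have hF := (hx1.add (hy1.mul hinv)).const_mul (1 / 2 : ℝ)
  have hev : (fun v => sigmaChart m v ((1 : ℝ), (0 : Fin m → ℝ), (0 : Fin m → ℝ), (0 : ℝ)))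
      =ᶠ[nhds w] (fun v => (1 / 2 : ℝ) * (x1F m v + v.1 * v.1 * (x1F m v)⁻¹)) := by
    filter_upwards [(isOpen_dom m).mem_nhds hw] with v hv
    rw [sigma_ey hv]
    simp [div_eq_mul_inv]
  rw [hev.fderiv_eq,
    (show HasFDerivAt (fun v : Chart m => (1 / 2 : ℝ) * (x1F m v + v.1 * v.1 * (x1F m v)⁻¹)) _ w
      from hF).fderiv]
  simp only [ContinuousLinearMap.smul_apply, ContinuousLinearMap.add_apply,
    ContinuousLinearMap.smulRight_apply, Py1_apply, Lg_apply, smul_eq_mul]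
  rw [← x1F_eq]
  simp
  field_simp

lemma fderiv_sigma_ez {m : ℕ} {w : Chart m} (hw : 0 < gF m w) :
    fderiv ℝ (fun v => sigmaChart m v ((0 : ℝ), (0 : Fin m → ℝ), (0 : Fin m → ℝ), (1 : ℝ))) w
        ((1 : ℝ), (0 : Fin m → ℝ), (0 : Fin m → ℝ), (0 : ℝ))
      = (1 / 2) * (w.2.2.2 / x1F m w + w.1 * w.1 * w.2.2.2 / (x1F m w) ^ 3) := by
  have hxne := (x1F_pos hw).ne'
  have hx1 := hasFDerivAt_x1F hw
  have hy1 := ((Py1 m).hasFDerivAt (x := w)).mul ((Pz m).hasFDerivAt (x := w))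
  have hinv := (hasDerivAt_inv hxne).comp_hasFDerivAt w hx1
  have hF := (hy1.mul hinv).const_mul (1 / 2 : ℝ)
  have hev : (fun v => sigmaChart m v ((0 : ℝ), (0 : Fin m → ℝ), (0 : Fin m → ℝ), (1 : ℝ)))
      =ᶠ[nhds w] (fun v => (1 / 2 : ℝ) * (v.1 * v.2.2.2 * (x1F m v)⁻¹)) := by
    filter_upwards [(isOpen_dom m).mem_nhds hw] with v hv
    rw [sigma_ez hv]
    simp [div_eq_mul_inv]
  rw [hev.fderiv_eq,
    (show HasFDerivAt (fun v : Chart m => (1 / 2 : ℝ) * (v.1 * v.2.2.2 * (x1F m v)⁻¹)) _ w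
      from hF).fderiv]
  simp only [ContinuousLinearMap.smul_apply, ContinuousLinearMap.add_apply,
    ContinuousLinearMap.smulRight_apply, Py1_apply, Pz_apply, Lg_apply, smul_eq_mul]
  rw [← x1F_eq]
  simp
  field_simp
  ring

/-- On `U_{x₁}` the coefficient of `dz/z³ ∧ dy₁` in `β`, i.e. `z³ β(∂_z, ∂_{y₁})`, equals
`-(x₁ + y₁²/x₁ + z²/x₁) = -(x₁² + y₁² + z²)/x₁`, which is nonzero; concretely,
`β(∂_z, ∂_{y₁}) = -(x₁ + y₁²/x₁ + z²/x₁)/z³ = -(x₁² + y₁² + z²)/(x₁ z³) ≠ 0`. -/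
theorem stmt_16 (m : ℕ) (w : Chart m)
    (hdom : 0 < 1 - w.1 ^ 2 - (∑ i, ((w.2.1 i) ^ 2 + (w.2.2.1 i) ^ 2)) - w.2.2.2 ^ 2)
    (hz : w.2.2.2 ≠ 0) :
    betaChart m w ((0 : ℝ), (0 : Fin m → ℝ), (0 : Fin m → ℝ), (1 : ℝ))
        ((1 : ℝ), (0 : Fin m → ℝ), (0 : Fin m → ℝ), (0 : ℝ))
      = -(x1F m w + w.1 ^ 2 / x1F m w + w.2.2.2 ^ 2 / x1F m w) / (w.2.2.2 ^ 3) ∧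
    -(x1F m w + w.1 ^ 2 / x1F m w + w.2.2.2 ^ 2 / x1F m w) / (w.2.2.2 ^ 3)
      = -((x1F m w) ^ 2 + w.1 ^ 2 + w.2.2.2 ^ 2) / (x1F m w * w.2.2.2 ^ 3) ∧
    betaChart m w ((0 : ℝ), (0 : Fin m → ℝ), (0 : Fin m → ℝ), (1 : ℝ))
        ((1 : ℝ), (0 : Fin m → ℝ), (0 : Fin m → ℝ), (0 : ℝ)) ≠ 0 := by

  have hw : 0 < gF m w := hdom
  have hx := x1F_pos hw
  have hxne := hx.ne'
  have h1 : betaChart m w ((0 : ℝ), (0 : Fin m → ℝ), (0 : Fin m → ℝ), (1 : ℝ))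
        ((1 : ℝ), (0 : Fin m → ℝ), (0 : Fin m → ℝ), (0 : ℝ))
      = -(x1F m w + w.1 ^ 2 / x1F m w + w.2.2.2 ^ 2 / x1F m w) / (w.2.2.2 ^ 3) := by
    rw [betaChart, fderiv_sigma_ey hw, fderiv_sigma_ez hw, sigma_ey hw, sigma_ez hw]
    field_simp
    ring
  have h2 : -(x1F m w + w.1 ^ 2 / x1F m w + w.2.2.2 ^ 2 / x1F m w) / (w.2.2.2 ^ 3)
      = -((x1F m w) ^ 2 + w.1 ^ 2 + w.2.2.2 ^ 2) / (x1F m w * w.2.2.2 ^ 3) := by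
    field_simp
  refine ⟨h1, h2, ?_⟩
  rw [h1, h2]
  have hnum : 0 < (x1F m w) ^ 2 + w.1 ^ 2 + w.2.2.2 ^ 2 := by positivity
  exact div_ne_zero (neg_ne_zero.2 hnum.ne') (mul_ne_zero hxne (pow_ne_zero 3 hz))
end
end
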